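/- arXiv:1010.0880 — 9 statements merged into one kernel-verified Lean document; each statement's English description precedes it below -/
import Mathlib

section
/- Let ι be a nonempty type and let R = ι → ℝ with its pointwise commutative ℝ-algebra structure. For every ℝ-linear derivation X : R → R (a Derivation ℝ R R) and every f, g ∈ R, it is impossible that simultaneously X f = g, X g = −f, and f · (X g) − g · (X f) = 1 (the constant function 1). Equivalently, there is no rank-one realization of so(3,ℝ): the relations g = X f, f = −X g, f·(X g) − g·(X f) = 1 imply f² + g² + 1 = 0 pointwise, which has no real solution. -/
/-- There is no rank-one realization of `so(3,ℝ)`: for a derivation (vector field)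
`X` on the algebra `R = ι → ℝ` of real-valued functions on a nonempty set and
functions `f, g : ι → ℝ`, it is impossible that simultaneously `X f = g`,
`X g = -f`, and `f * X g - g * X f = 1`. -/
theorem no_rank_one_so3_realization {ι : Type*} [Nonempty ι]
    (X : Derivation ℝ (ι → ℝ) (ι → ℝ)) (f g : ι → ℝ) :
    ¬ (X f = g ∧ X g = -f ∧ f * X g - g * X f = 1) := by
  rintro ⟨h1, h2, h3⟩
  rw [h1, h2] at h3
  obtain ⟨i⟩ := ‹Nonempty ι›
  have := congrFun h3 i
  simp only [Pi.sub_apply, Pi.mul_apply, Pi.neg_apply, Pi.one_apply] at this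
  nlinarith [sq_nonneg (f i), sq_nonneg (g i)]
end

section
/- The real Lie algebra so(3,ℝ) of skew-symmetric 3×3 real matrices (with commutator bracket) is not isomorphic, as a Lie algebra over ℝ, to sl(2,ℝ), the Lie algebra of trace-zero 2×2 real matrices. -/
/-!
`sl(2, ℝ)` contains an `sl₂`-triple `(h, e, f)`, so `ad h` has the nonzero real eigenvalue `2`.
In `so(n, ℝ)` every `ad A` is skew-adjoint for the positive definite form `⟨X, Y⟩ = tr (Xᵀ Y)`,
so it has no nonzero real eigenvalue and `so(n, ℝ)` contains no `sl₂`-triple. A Lie algebra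
isomorphism would carry the triple of `sl(2, ℝ)` to one in `so(3, ℝ)`.
-/

open Matrix LieAlgebra

namespace Matrix

variable {n R : Type*} [Fintype n] [CommRing R]

theorem trace_transpose_mul_commutator_of_transpose_eq_neg {A : Matrix n n R} (hA : Aᵀ = -A)
    (X Y : Matrix n n R) :
    trace (Yᵀ * (A * X - X * A)) = -trace ((A * Y - Y * A)ᵀ * X) := by
  rw [transpose_sub, transpose_mul, transpose_mul, hA]
  simp only [mul_sub, sub_mul, Matrix.mul_neg, Matrix.neg_mul, trace_sub, trace_neg,
    Matrix.mul_assoc]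
  rw [trace_mul_comm A (Yᵀ * X)]
  simp only [Matrix.mul_assoc]
  ring

theorem eq_zero_of_commutator_eq_smul_of_transpose_eq_neg {A X : Matrix n n ℝ} {c : ℝ}
    (hA : Aᵀ = -A) (hc : c ≠ 0) (h : A * X - X * A = c • X) : X = 0 := by
  have h2c : 2 * c * trace (Xᵀ * X) = 0 := by
    have := trace_transpose_mul_commutator_of_transpose_eq_neg hA X X
    rw [h, transpose_smul, Matrix.mul_smul, Matrix.smul_mul, trace_smul, smul_eq_mul] at this
    linarith
  have htr : trace (Xᵀ * X) = 0 := by simpa [hc] using h2c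
  rwa [← conjTranspose_eq_transpose_of_trivial, trace_conjTranspose_mul_self_eq_zero_iff] at htr

end Matrix

section

variable {R L L' : Type*} [CommRing R] [LieRing L] [LieAlgebra R L] [LieRing L'] [LieAlgebra R L']

theorem IsSl2Triple.map {h e f : L} (t : IsSl2Triple h e f) (φ : L →ₗ⁅R⁆ L')
    (hφ : Function.Injective φ) : IsSl2Triple (φ h) (φ e) (φ f) where
  h_ne_zero := (map_ne_zero_iff φ hφ).2 t.h_ne_zero
  lie_e_f := by rw [← LieHom.map_lie, t.lie_e_f]
  lie_h_e_nsmul := by rw [← LieHom.map_lie, t.lie_h_e_nsmul, map_nsmul]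
  lie_h_f_nsmul := by rw [← LieHom.map_lie, t.lie_h_f_nsmul, map_neg, map_nsmul]

namespace LieAlgebra

theorem SpecialLinear.isSl2Triple_single {n : Type*} [Fintype n] [DecidableEq n] [Nontrivial R]
    {i j : n} (hij : i ≠ j) :
    IsSl2Triple (singleSubSingle i j (1 : R)) (single i j hij 1) (single j i hij.symm 1) where
  h_ne_zero := by
    intro h
    simpa [hij.symm, single_apply] using congrFun (congrFun (congrArg Subtype.val h) i) i
  lie_e_f := by ext : 1; simp [Ring.lie_def]
  lie_h_e_nsmul := by ext : 1; simp [Ring.lie_def, hij.symm, sub_mul, mul_sub, two_nsmul]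
  lie_h_f_nsmul := by ext : 1; simp [Ring.lie_def, hij, sub_mul, mul_sub, two_nsmul]; abel

theorem Orthogonal.not_isSl2Triple {n : Type*} [Fintype n] [DecidableEq n] (h e f : so n ℝ) :
    ¬IsSl2Triple h e f := fun t =>
  t.e_ne_zero <| Subtype.ext <| eq_zero_of_commutator_eq_smul_of_transpose_eq_neg
    ((mem_so n ℝ h).1 h.2) two_ne_zero (congrArg Subtype.val (t.lie_h_e_smul ℝ))

end LieAlgebra

end

/-- The real Lie algebra `so(3, ℝ)` of skew-symmetric `3 × 3` real matrices is not
isomorphic, as a Lie algebra over `ℝ`, to `sl(2, ℝ)`, the Lie algebra of trace-zero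
`2 × 2` real matrices. -/
theorem so3_not_isomorphic_to_sl2 :
    IsEmpty ((LieAlgebra.Orthogonal.so (Fin 3) ℝ) ≃ₗ⁅ℝ⁆ (LieAlgebra.SpecialLinear.sl (Fin 2) ℝ)) :=
  ⟨fun e => Orthogonal.not_isSl2Triple _ _ _ <|
    (SpecialLinear.isSl2Triple_single (R := ℝ) (zero_ne_one' (Fin 2))).map e.symm.toLieHom
      e.symm.injective⟩
end

section
/- Let b, c ∈ ℝ[X] be real polynomials with b ≠ 0 satisfying b² = b · c' − b' · c (formal derivatives). Then there exists l ∈ ℝ such that c = (X + C l) · b, i.e., c(u) = (u + l)·b(u). -/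
/-!
Subtracting `X * b` turns the hypothesis into the vanishing of the Wronskian `W(b, c - X b)`.
A polynomial `f` with `W(b, f) = 0` that vanishes at a point `a` where `b` does not must be zero:
if `f` has a root of multiplicity `m > 0` there, then `b f' = b' f` has multiplicity `m - 1` at
`a` on the left and at least `m` on the right. Applied to `f = d - (d(a) / b(a)) b`, this makes
`d = c - X b` a constant multiple of `b`.
-/

open Polynomial

namespace Polynomial

theorem eq_zero_of_wronskian_eq_zero_of_isRoot {R : Type*} [CommRing R] [IsDomain R] [CharZero R]
    {b f : R[X]} {a : R} (hb : ¬b.IsRoot a) (hf : f.IsRoot a) (hw : wronskian b f = 0) :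
    f = 0 := by
  by_contra hf0
  have hbf : b * derivative f = derivative b * f := sub_eq_zero.mp hw
  have hb0 : b ≠ 0 := by rintro rfl; simp at hb
  have hf'0 : derivative f ≠ 0 := by
    intro hf'
    have hfC := eq_C_of_natDegree_eq_zero (derivative_eq_zero.mp hf')
    rw [hfC, IsRoot.def, eval_C] at hf
    exact hf0 (by rw [hfC, hf, C_0])
  have hlhs : b * derivative f ≠ 0 := mul_ne_zero hb0 hf'0
  have hmult := congrArg (rootMultiplicity a) hbf
  rw [rootMultiplicity_mul hlhs, rootMultiplicity_mul (hbf ▸ hlhs), rootMultiplicity_eq_zero hb,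
    derivative_rootMultiplicity_of_root hf] at hmult
  have hpos : 0 < f.rootMultiplicity a := (rootMultiplicity_pos hf0).mpr hf
  omega

theorem exists_eq_C_mul_of_wronskian_eq_zero {K : Type*} [Field K] [CharZero K] {b d : K[X]}
    (hb : b ≠ 0) (hw : wronskian b d = 0) : ∃ l : K, d = C l * b := by
  obtain ⟨a, ha⟩ : ∃ a, b.eval a ≠ 0 := by
    by_contra! h
    exact hb (Polynomial.funext fun a => by rw [h a, eval_zero])
  refine ⟨d.eval a / b.eval a, sub_eq_zero.mp (eq_zero_of_wronskian_eq_zero_of_isRoot ha ?_ ?_)⟩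
  · rw [IsRoot.def, eval_sub, eval_mul, eval_C, div_mul_cancel₀ _ ha, sub_self]
  · rw [← hw, wronskian, wronskian, derivative_sub, derivative_C_mul]
    ring

end Polynomial

/-- If real polynomials `b ≠ 0` and `c` satisfy `b² = b c' - b' c` (formal
derivatives), then `c(u) = (u + l) b(u)` for some real constant `l`. -/
theorem rank_one_condition_polynomial (b c : ℝ[X]) (hb : b ≠ 0)
    (h : b ^ 2 = b * derivative c - derivative b * c) :
    ∃ l : ℝ, c = (X + C l) * b := by
  have hw : wronskian b (c - X * b) = 0 := by
    rw [wronskian, derivative_sub, derivative_mul, derivative_X]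
    linear_combination -h
  obtain ⟨l, hl⟩ := exists_eq_C_mul_of_wronskian_eq_zero hb hw
  exact ⟨l, by linear_combination hl⟩
end

section
/- Let b ∈ ℝ[X] be a nonzero real polynomial satisfying b · b' + X · (b · b'' − (b')²) = 0 (formal derivatives). Then there exist λ ∈ ℝ and m ∈ ℕ such that b = C λ * X^m, i.e., b(u) = λ u^m. -/
/-!
Write `θ = X · d/dX`; it multiplies the coefficient of `Xⁿ` by `n`, and the equation reads
`b · θ²b = (θb)²`. With `m = deg b`, the polynomial `g = θb - m b` then satisfies `b · θg = θb · g`,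
and comparing the coefficients of `X ^ (deg b + deg g)` forces `deg g = m` unless `g = 0`. But the
coefficient of `Xᵐ` in `g` vanishes, so `g = 0`, i.e. `n bₙ = m bₙ` for all `n`: `b` is a monomial.
-/

open Polynomial

namespace Polynomial

variable {R : Type*}

section CommSemiring
variable [CommSemiring R]

theorem coeff_X_mul_derivative (p : R[X]) (n : ℕ) :
    (X * derivative p).coeff n = n * p.coeff n := by
  cases n with
  | zero => simp
  | succ n => rw [coeff_X_mul, coeff_derivative]; push_cast; ring

theorem natDegree_X_mul_derivative_le (p : R[X]) :
    (X * derivative p).natDegree ≤ p.natDegree :=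
  natDegree_le_iff_coeff_eq_zero.mpr fun n hn => by
    rw [coeff_X_mul_derivative, coeff_eq_zero_of_natDegree_lt hn, mul_zero]

end CommSemiring

variable [CommRing R] [IsDomain R] [CharZero R]

theorem natDegree_eq_of_mul_X_mul_derivative_eq {f g : R[X]} (hf : f ≠ 0) (hg : g ≠ 0)
    (h : f * (X * derivative g) = X * derivative f * g) : f.natDegree = g.natDegree := by
  have hcoeff := congrArg (coeff · (f.natDegree + g.natDegree)) h
  simp only [coeff_mul_add_eq_of_natDegree_le le_rfl (natDegree_X_mul_derivative_le _),
    coeff_mul_add_eq_of_natDegree_le (natDegree_X_mul_derivative_le _) le_rfl,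
    coeff_X_mul_derivative, coeff_natDegree] at hcoeff
  have hlc : f.leadingCoeff * g.leadingCoeff ≠ 0 :=
    mul_ne_zero (leadingCoeff_ne_zero.mpr hf) (leadingCoeff_ne_zero.mpr hg)
  have : ((g.natDegree : R) - f.natDegree) * (f.leadingCoeff * g.leadingCoeff) = 0 := by
    linear_combination hcoeff
  exact_mod_cast (sub_eq_zero.mp ((mul_eq_zero.mp this).resolve_right hlc)).symm

theorem eq_C_mul_X_pow_of_X_mul_derivative_eq {p : R[X]} {m : ℕ}
    (h : X * derivative p = C (m : R) * p) : p = C (p.coeff m) * X ^ m := by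
  ext n
  have hn := congrArg (coeff · n) h
  simp only [coeff_X_mul_derivative, coeff_C_mul] at hn
  rw [coeff_C_mul_X_pow]
  split_ifs with hnm
  · rw [hnm]
  · have : ((n : R) - m) * p.coeff n = 0 := by linear_combination hn
    refine (mul_eq_zero.mp this).resolve_left ?_
    exact sub_ne_zero.mpr (Nat.cast_injective.ne hnm)

theorem X_mul_derivative_eq_natDegree_mul {b : R[X]} (hb : b ≠ 0)
    (h : b * (X * derivative (X * derivative b)) = (X * derivative b) ^ 2) :
    X * derivative b = C (b.natDegree : R) * b := by
  set g := X * derivative b - C (b.natDegree : R) * b with hg_def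
  have hg : b * (X * derivative g) = X * derivative b * g := by
    simp only [hg_def, derivative_sub, derivative_C_mul]
    linear_combination h
  have hg_coeff : g.coeff b.natDegree = 0 := by
    simp only [hg_def, coeff_sub, coeff_X_mul_derivative, coeff_C_mul, sub_self]
  by_contra hne
  have hg0 : g ≠ 0 := sub_ne_zero.mpr hne
  rw [natDegree_eq_of_mul_X_mul_derivative_eq hb hg0 hg, coeff_natDegree] at hg_coeff
  exact hg0 (leadingCoeff_eq_zero.mp hg_coeff)

end Polynomial

/-- If a nonzero real polynomial `b` satisfies
`b b' + X (b b'' - (b')²) = 0` (formal derivatives), then `b = λ Xᵐ` for some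
`λ ∈ ℝ` and `m ∈ ℕ`. -/
theorem polynomial_ode_solutions_are_monomials (b : ℝ[X]) (hb : b ≠ 0)
    (h : b * derivative b
        + X * (b * derivative (derivative b) - (derivative b) ^ 2) = 0) :
    ∃ (l : ℝ) (m : ℕ), b = C l * X ^ m := by
  have h_euler : b * (X * derivative (X * derivative b)) = (X * derivative b) ^ 2 := by
    rw [derivative_mul, derivative_X, one_mul]
    linear_combination X * h
  exact ⟨_, _,
    eq_C_mul_X_pow_of_X_mul_derivative_eq (X_mul_derivative_eq_natDegree_mul hb h_euler)⟩
end

section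
/- Let u : ℝ → ℝ → ℝ (first argument time t, second argument space x) be such that for every t the function u t is three times continuously differentiable (ContDiff ℝ 3), and u is a solution of the Harry–Dym equation: for all t, x, the function s ↦ u s x has derivative (u t x)³ · (iteratedDeriv 3 (u t) x) at s = t. Fix ε ∈ ℝ and define v : ℝ → ℝ → ℝ by v t y = (1 − ε·y)² · u t (y / (1 − ε·y)). Then for every t and every y with 1 − ε·y ≠ 0, the function s ↦ v s y has derivative (v t y)³ · (iteratedDeriv 3 (v t) y) at s = t. -/
/-!
The weight-two action `f ↦ (1 - ε y)² f (y / (1 - ε y))` of the Möbius map `y ↦ y / (1 - ε y)`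
intertwines the third derivative with the weight `-4` action (Bol's identity): each
differentiation of `(1 - ε y)ⁿ f (y / (1 - ε y))` lowers the weight by two on the `f'` term, and for
`n = 2` the lower-order terms cancel after three steps. Hence `v³ v_yyy` carries the factor
`(1 - ε y)^(3·2 - 4) = (1 - ε y)²`, which is exactly the factor in `v_t = (1 - ε y)² u_t`.
-/

open Filter Topology

noncomputable def projectiveTransform (ε : ℝ) (n : ℤ) (g : ℝ → ℝ) (z : ℝ) : ℝ :=
  (1 - ε * z) ^ n * g (z / (1 - ε * z))

section ProjectiveTransform

variable {ε : ℝ} {g : ℝ → ℝ} {y : ℝ}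

lemma eventually_one_sub_mul_ne_zero (hy : 1 - ε * y ≠ 0) : ∀ᶠ z in 𝓝 y, 1 - ε * z ≠ 0 :=
  (continuous_const.sub (continuous_const.mul continuous_id)).continuousAt.eventually_ne hy

lemma hasDerivAt_div_one_sub_mul (hy : 1 - ε * y ≠ 0) :
    HasDerivAt (fun z => z / (1 - ε * z)) ((1 - ε * y) ^ (-2 : ℤ)) y := by
  refine ((hasDerivAt_id y).div (((hasDerivAt_id y).const_mul ε).const_sub 1) hy).congr_deriv ?_
  simp only [id, zpow_neg]
  field_simp
  ring

lemma hasDerivAt_projectiveTransform (n : ℤ) (hg : DifferentiableAt ℝ g (y / (1 - ε * y)))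
    (hy : 1 - ε * y ≠ 0) :
    HasDerivAt (projectiveTransform ε n g)
      (-(n * ε) * projectiveTransform ε (n - 1) g y
        + projectiveTransform ε (n - 2) (deriv g) y) y := by
  have hpow := (hasDerivAt_zpow n _ (Or.inl hy)).comp y
    (((hasDerivAt_id y).const_mul ε).const_sub 1)
  have hcomp := hg.hasDerivAt.comp y (hasDerivAt_div_one_sub_mul hy)
  refine (hpow.mul hcomp).congr_deriv ?_
  simp only [projectiveTransform, Function.comp_def, id, zpow_sub₀ hy, zpow_neg]
  field_simp

lemma deriv_projectiveTransform_eventuallyEq (n : ℤ) (hg : Differentiable ℝ g)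
    (hy : 1 - ε * y ≠ 0) :
    deriv (projectiveTransform ε n g) =ᶠ[𝓝 y] fun z =>
      -(n * ε) * projectiveTransform ε (n - 1) g z
        + projectiveTransform ε (n - 2) (deriv g) z := by
  filter_upwards [eventually_one_sub_mul_ne_zero hy] with z hz
  exact (hasDerivAt_projectiveTransform n (hg _) hz).deriv

lemma iteratedDeriv_three_projectiveTransform_two (hg : ContDiff ℝ 3 g) (hy : 1 - ε * y ≠ 0) :
    iteratedDeriv 3 (projectiveTransform ε 2 g) y
      = projectiveTransform ε (-4) (iteratedDeriv 3 g) y := by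
  have hg₀ : Differentiable ℝ g := hg.differentiable (by norm_num)
  have hg₁ : Differentiable ℝ (deriv g) := by
    simpa using hg.differentiable_iteratedDeriv 1 (by norm_num)
  have hg₂ : Differentiable ℝ (deriv (deriv g)) := by
    simpa [iteratedDeriv_succ] using hg.differentiable_iteratedDeriv 2 (by norm_num)
  have h₁ := deriv_projectiveTransform_eventuallyEq 2 hg₀ hy
  have h₂ : deriv (deriv (projectiveTransform ε 2 g)) =ᶠ[𝓝 y] fun z =>
      2 * ε ^ 2 * projectiveTransform ε 0 g z - 2 * ε * projectiveTransform ε (-1) (deriv g) z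
        + projectiveTransform ε (-2) (deriv (deriv g)) z := by
    filter_upwards [h₁.eventuallyEq_nhds, eventually_one_sub_mul_ne_zero hy] with z hz₁ hz
    rw [hz₁.deriv_eq]
    refine ((((hasDerivAt_projectiveTransform _ (hg₀ _) hz).const_mul _).add
      (hasDerivAt_projectiveTransform _ (hg₁ _) hz))).deriv.trans ?_
    norm_num
    ring
  rw [iteratedDeriv_eq_iterate, Function.iterate_succ_apply', Function.iterate_succ_apply',
    Function.iterate_one, h₂.deriv_eq]
  refine (((((hasDerivAt_projectiveTransform 0 (hg₀ _) hy).const_mul (2 * ε ^ 2)).sub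
    ((hasDerivAt_projectiveTransform (-1) (hg₁ _) hy).const_mul (2 * ε))).add
      (hasDerivAt_projectiveTransform (-2) (hg₂ _) hy))).deriv.trans ?_
  simp only [iteratedDeriv_eq_iterate, Function.iterate_succ_apply']
  norm_num
  ring

end ProjectiveTransform

/-- Projective symmetry of the Harry–Dym equation `u_t = u³ u_{xxx}`: if `u` is a
solution (each `u t` being `C³`), then for any `ε ∈ ℝ`, the function
`v t y = (1 - ε y)² * u t (y / (1 - ε y))` satisfies the Harry–Dym equation at
every point with `1 - ε y ≠ 0`. -/
theorem harry_dym_projective_symmetry (u : ℝ → ℝ → ℝ)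
    (hreg : ∀ t, ContDiff ℝ 3 (u t))
    (hsol : ∀ t x, HasDerivAt (fun s => u s x)
      ((u t x) ^ 3 * iteratedDeriv 3 (u t) x) t)
    (ε : ℝ) (v : ℝ → ℝ → ℝ)
    (hv : ∀ t y, v t y = (1 - ε * y) ^ 2 * u t (y / (1 - ε * y))) :
    ∀ t y, 1 - ε * y ≠ 0 →
      HasDerivAt (fun s => v s y) ((v t y) ^ 3 * iteratedDeriv 3 (v t) y) t := by
  intro t y hy
  have hvt : v t = projectiveTransform ε 2 (u t) :=
    funext fun z => by rw [hv, projectiveTransform, zpow_ofNat]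
  have htime : (fun s => v s y) = fun s => (1 - ε * y) ^ 2 * u s (y / (1 - ε * y)) :=
    funext fun s => hv s y
  rw [htime, hvt, iteratedDeriv_three_projectiveTransform_two (hreg t) hy]
  refine ((hsol t _).const_mul _).congr_deriv ?_
  simp only [projectiveTransform, zpow_neg, zpow_ofNat]
  field_simp
end

section
/- Fix K ∈ ℝ. Let u : ℝ → ℝ → ℝ be such that for every t the function u t is three times continuously differentiable (ContDiff ℝ 3), deriv (u t) x ≠ 0 for all t, x, and u is a solution of the Schwarzian evolution equation: for all t, x, the function s ↦ u s x has derivative K·( iteratedDeriv 3 (u t) x / (deriv (u t) x)³ − (3/2)·(iteratedDeriv 2 (u t) x)² / (deriv (u t) x)⁴ ) at s = t. Fix ε ∈ ℝ and define v t x = u t (x / (1 + ε·x)). Then for every t and every x with 1 + ε·x ≠ 0, deriv (v t) x ≠ 0 and the function s ↦ v s x has derivative K·( iteratedDeriv 3 (v t) x / (deriv (v t) x)³ − (3/2)·(iteratedDeriv 2 (v t) x)² / (deriv (v t) x)⁴ ) at s = t. -/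
/-!
The right-hand side of the equation is `S(u) / u_x²`, where `S` is the Schwarzian derivative.
`S` obeys the cocycle rule `S(f ∘ φ) = (S(f) ∘ φ) · φ'² + S(φ)` and vanishes on Möbius maps, so for
`v = u ∘ φ` with `φ x = x / (1 + ε x)` both `S(v)` and `v_x²` pick up the same factor `φ'²`.
-/

open Set

noncomputable def schwarzian (f : ℝ → ℝ) (x : ℝ) : ℝ :=
  iteratedDeriv 3 f x / deriv f x - 3 / 2 * (iteratedDeriv 2 f x / deriv f x) ^ 2

lemma schwarzian_div_deriv_sq (f : ℝ → ℝ) (x : ℝ) :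
    schwarzian f x / deriv f x ^ 2 =
      iteratedDeriv 3 f x / deriv f x ^ 3 - 3 / 2 * iteratedDeriv 2 f x ^ 2 / deriv f x ^ 4 := by
  unfold schwarzian
  ring

lemma schwarzian_eq_deriv (f : ℝ → ℝ) (x : ℝ) :
    schwarzian f x = deriv (deriv (deriv f)) x / deriv f x
      - 3 / 2 * (deriv (deriv f) x / deriv f x) ^ 2 := by
  simp only [schwarzian, iteratedDeriv_eq_iterate, Function.iterate_succ_apply',
    Function.iterate_zero_apply]

lemma ContDiffOn.hasDerivAt_deriv {n : WithTop ℕ∞} {g : ℝ → ℝ} {s : Set ℝ}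
    (hg : ContDiffOn ℝ n g s) (hs : IsOpen s) (hn : n ≠ 0) {z : ℝ} (hz : z ∈ s) :
    HasDerivAt g (deriv g z) z :=
  ((hg.differentiableOn hn).differentiableAt (hs.mem_nhds hz)).hasDerivAt

section ChainRule

variable {f φ : ℝ → ℝ} {U V : Set ℝ}

lemma deriv_comp_eqOn (hf : ContDiffOn ℝ 1 f V) (hV : IsOpen V) (hφ : ContDiffOn ℝ 1 φ U)
    (hU : IsOpen U) (hUV : MapsTo φ U V) :
    EqOn (deriv (f ∘ φ)) (fun z => deriv f (φ z) * deriv φ z) U := fun z hz =>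
  ((hf.hasDerivAt_deriv hV one_ne_zero (hUV hz)).comp z
    (hφ.hasDerivAt_deriv hU one_ne_zero hz)).deriv

lemma deriv_deriv_comp_eqOn (hf : ContDiffOn ℝ 2 f V) (hV : IsOpen V)
    (hφ : ContDiffOn ℝ 2 φ U) (hU : IsOpen U) (hUV : MapsTo φ U V) :
    EqOn (deriv (deriv (f ∘ φ)))
      (fun z => deriv (deriv f) (φ z) * deriv φ z ^ 2 + deriv f (φ z) * deriv (deriv φ) z) U := by
  intro z hz
  have hf' := hf.deriv_of_isOpen hV (m := 1) (by norm_num)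
  have hφ' := hφ.deriv_of_isOpen hU (m := 1) (by norm_num)
  rw [((deriv_comp_eqOn (hf.of_le one_le_two) hV (hφ.of_le one_le_two) hU hUV).eventuallyEq_of_mem
    (hU.mem_nhds hz)).deriv_eq]
  have := ((hf'.hasDerivAt_deriv hV one_ne_zero (hUV hz)).comp z
    (hφ.hasDerivAt_deriv hU two_ne_zero hz)).mul (hφ'.hasDerivAt_deriv hU one_ne_zero hz)
  refine this.deriv.trans ?_
  simp only [Function.comp_apply]
  ring

lemma deriv_deriv_deriv_comp_eqOn (hf : ContDiffOn ℝ 3 f V) (hV : IsOpen V)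
    (hφ : ContDiffOn ℝ 3 φ U) (hU : IsOpen U) (hUV : MapsTo φ U V) :
    EqOn (deriv (deriv (deriv (f ∘ φ))))
      (fun z => deriv (deriv (deriv f)) (φ z) * deriv φ z ^ 3
        + 3 * deriv (deriv f) (φ z) * deriv φ z * deriv (deriv φ) z
        + deriv f (φ z) * deriv (deriv (deriv φ)) z) U := by
  intro z hz
  have hf' := hf.deriv_of_isOpen hV (m := 2) (by norm_num)
  have hf'' := hf'.deriv_of_isOpen hV (m := 1) (by norm_num)
  have hφ' := hφ.deriv_of_isOpen hU (m := 2) (by norm_num)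
  have hφ'' := hφ'.deriv_of_isOpen hU (m := 1) (by norm_num)
  rw [((deriv_deriv_comp_eqOn (hf.of_le (by norm_num)) hV (hφ.of_le (by norm_num)) hU
    hUV).eventuallyEq_of_mem (hU.mem_nhds hz)).deriv_eq]
  have hφz := hφ.hasDerivAt_deriv hU three_ne_zero hz
  have h₁ := ((hf''.hasDerivAt_deriv hV one_ne_zero (hUV hz)).comp z hφz).mul
    ((hφ'.hasDerivAt_deriv hU two_ne_zero hz).pow 2)
  have h₂ := ((hf'.hasDerivAt_deriv hV two_ne_zero (hUV hz)).comp z hφz).mul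
    (hφ''.hasDerivAt_deriv hU one_ne_zero hz)
  refine (h₁.add h₂).deriv.trans ?_
  simp only [Function.comp_apply, Pi.pow_apply]
  ring

lemma schwarzian_comp (hf : ContDiffOn ℝ 3 f V) (hV : IsOpen V)
    (hφ : ContDiffOn ℝ 3 φ U) (hU : IsOpen U) (hUV : MapsTo φ U V) {x : ℝ} (hx : x ∈ U)
    (hf' : deriv f (φ x) ≠ 0) :
    schwarzian (f ∘ φ) x = schwarzian f (φ x) * deriv φ x ^ 2 + schwarzian φ x := by
  simp only [schwarzian_eq_deriv]
  rw [deriv_comp_eqOn (hf.of_le (by norm_num)) hV (hφ.of_le (by norm_num)) hU hUV hx,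
    deriv_deriv_comp_eqOn (hf.of_le (by norm_num)) hV (hφ.of_le (by norm_num)) hU hUV hx,
    deriv_deriv_deriv_comp_eqOn hf hV hφ hU hUV hx]
  rcases eq_or_ne (deriv φ x) 0 with hφ' | hφ'
  · simp [hφ']
  · field_simp
    ring

end ChainRule

noncomputable def moebius (a b c d : ℝ) (z : ℝ) : ℝ := (a * z + b) / (c * z + d)

section Moebius

variable (a b : ℝ) {c d : ℝ}

lemma hasDerivAt_div_linear_pow (e : ℝ) (k : ℕ) {z : ℝ} (hz : c * z + d ≠ 0) :
    HasDerivAt (fun z => e / (c * z + d) ^ k) (-(k * c * e) / (c * z + d) ^ (k + 1)) z := by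
  have hlin : HasDerivAt (fun z => c * z + d) c z := by
    simpa using ((hasDerivAt_id z).const_mul c).add_const d
  refine ((hasDerivAt_const z e).div (hlin.pow k) (pow_ne_zero k hz)).congr_deriv ?_
  rcases k with _ | k
  · simp
  · simp only [Pi.pow_apply, Nat.add_sub_cancel]
    field_simp
    push_cast
    ring

lemma hasDerivAt_moebius {z : ℝ} (hz : c * z + d ≠ 0) :
    HasDerivAt (moebius a b c d) ((a * d - b * c) / (c * z + d) ^ 2) z := by
  have hlin : ∀ p q : ℝ, HasDerivAt (fun z => p * z + q) p z := fun p q => by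
    simpa using ((hasDerivAt_id z).const_mul p).add_const q
  refine ((hlin a b).div (hlin c d) hz).congr_deriv ?_
  ring

lemma isOpen_moebius_domain : IsOpen {z : ℝ | c * z + d ≠ 0} :=
  isOpen_ne_fun (by fun_prop) continuous_const

lemma contDiffOn_moebius {n : WithTop ℕ∞} :
    ContDiffOn ℝ n (moebius a b c d) {z | c * z + d ≠ 0} :=
  ContDiffOn.div (by fun_prop) (by fun_prop) fun _ hz => hz

lemma deriv_moebius_eqOn :
    EqOn (deriv (moebius a b c d)) (fun z => (a * d - b * c) / (c * z + d) ^ 2)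
      {z | c * z + d ≠ 0} := fun _ hz => (hasDerivAt_moebius a b hz).deriv

lemma deriv_deriv_moebius_eqOn :
    EqOn (deriv (deriv (moebius a b c d)))
      (fun z => -(2 * c * (a * d - b * c)) / (c * z + d) ^ 3) {z | c * z + d ≠ 0} := by
  intro z hz
  rw [((deriv_moebius_eqOn a b).eventuallyEq_of_mem (isOpen_moebius_domain.mem_nhds hz)).deriv_eq,
    (hasDerivAt_div_linear_pow _ 2 hz).deriv]
  norm_num

lemma deriv_deriv_deriv_moebius {x : ℝ} (hx : c * x + d ≠ 0) :
    deriv (deriv (deriv (moebius a b c d))) x = 6 * c ^ 2 * (a * d - b * c) / (c * x + d) ^ 4 := by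
  rw [((deriv_deriv_moebius_eqOn a b).eventuallyEq_of_mem
    (isOpen_moebius_domain.mem_nhds hx)).deriv_eq, (hasDerivAt_div_linear_pow _ 3 hx).deriv]
  push_cast
  ring

lemma schwarzian_moebius {x : ℝ} (hx : c * x + d ≠ 0) : schwarzian (moebius a b c d) x = 0 := by
  rw [schwarzian_eq_deriv, deriv_moebius_eqOn a b hx, deriv_deriv_moebius_eqOn a b hx,
    deriv_deriv_deriv_moebius a b hx]
  rcases eq_or_ne (a * d - b * c) 0 with hD | hD
  · simp [hD]
  · field_simp
    ring

end Moebius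

/-- Projective symmetry of the Schwarzian evolution equation
`u_t = K (u_{xxx}/u_x³ - (3/2) u_{xx}²/u_x⁴)`: if `u` is a solution with
`u_x ≠ 0` everywhere (each `u t` being `C³`), then for any `ε ∈ ℝ`, the
function `v t x = u t (x / (1 + ε x))` is again a solution at every point
with `1 + ε x ≠ 0`. -/
theorem schwarzian_projective_symmetry (K : ℝ) (u : ℝ → ℝ → ℝ)
    (hreg : ∀ t, ContDiff ℝ 3 (u t))
    (hx : ∀ t x, deriv (u t) x ≠ 0)
    (hsol : ∀ t x, HasDerivAt (fun s => u s x)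
      (K * (iteratedDeriv 3 (u t) x / (deriv (u t) x) ^ 3
        - (3 / 2) * (iteratedDeriv 2 (u t) x) ^ 2 / (deriv (u t) x) ^ 4)) t)
    (ε : ℝ) (v : ℝ → ℝ → ℝ)
    (hv : ∀ t x, v t x = u t (x / (1 + ε * x))) :
    ∀ t x, 1 + ε * x ≠ 0 →
      deriv (v t) x ≠ 0 ∧
      HasDerivAt (fun s => v s x)
        (K * (iteratedDeriv 3 (v t) x / (deriv (v t) x) ^ 3
          - (3 / 2) * (iteratedDeriv 2 (v t) x) ^ 2 / (deriv (v t) x) ^ 4)) t := by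
  intro t x hεx
  set φ := moebius 1 0 ε 1
  have hφ : ∀ z, φ z = z / (1 + ε * z) := fun z => by simp [φ, moebius, add_comm]
  have hx' : ε * x + 1 ≠ 0 := by rwa [add_comm]
  have hvt : v t = u t ∘ φ := funext fun z => by rw [hv, Function.comp_apply, hφ]
  have hφ' : deriv φ x ≠ 0 := by
    rw [(hasDerivAt_moebius 1 0 hx').deriv]
    exact div_ne_zero (by simp) (pow_ne_zero 2 hx')
  have hu := (hreg t).contDiffOn (s := univ)
  have hd : deriv (v t) x = deriv (u t) (φ x) * deriv φ x := by
    rw [hvt, deriv_comp_eqOn (hu.of_le (by norm_num)) isOpen_univ (contDiffOn_moebius 1 0)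
      isOpen_moebius_domain (mapsTo_univ _ _) hx']
  have hS : schwarzian (v t) x = schwarzian (u t) (φ x) * deriv φ x ^ 2 := by
    rw [hvt, schwarzian_comp hu isOpen_univ (contDiffOn_moebius 1 0) isOpen_moebius_domain
      (mapsTo_univ _ _) hx' (hx t _), schwarzian_moebius 1 0 hx', add_zero]
  refine ⟨hd ▸ mul_ne_zero (hx t _) hφ', ?_⟩
  rw [← schwarzian_div_deriv_sq, hS, hd, mul_pow, mul_div_mul_right _ _ (pow_ne_zero 2 hφ'),
    schwarzian_div_deriv_sq]
  simpa only [hv, ← hφ] using hsol t (φ x)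
end

section
/- Fix K ∈ ℝ. Let u : ℝ → ℝ → ℝ be such that for every t the function u t is three times continuously differentiable (ContDiff ℝ 3), deriv (u t) x ≠ 0 for all t, x, and u is a solution of the Schwarzian evolution equation: for all t, x, the function s ↦ u s x has derivative K·( iteratedDeriv 3 (u t) x / (deriv (u t) x)³ − (3/2)·(iteratedDeriv 2 (u t) x)² / (deriv (u t) x)⁴ ) at s = t. Then for every λ > 0, the function v defined by v t x = λ^(1/3) · u (t/λ) x (real power) is again a solution: for all t, x, deriv (v t) x ≠ 0 and the function s ↦ v s x has derivative K·( iteratedDeriv 3 (v t) x / (deriv (v t) x)³ − (3/2)·(iteratedDeriv 2 (v t) x)² / (deriv (v t) x)⁴ ) at s = t. -/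
/-! The generator `t∂t + (u/3)∂u` is a symmetry because the right-hand side of the equation is
homogeneous of degree `-2` in `u`: with `c = λ^(1/3)`, replacing `u` by `c u` divides it by `c²`,
while rescaling time by `λ = c³` multiplies `u_t` by `c / λ = 1 / c²`. -/

noncomputable def schwarzianRHS (K : ℝ) (f : ℝ → ℝ) (x : ℝ) : ℝ :=
  K * (iteratedDeriv 3 f x / deriv f x ^ 3 - (3 / 2) * iteratedDeriv 2 f x ^ 2 / deriv f x ^ 4)

theorem schwarzianRHS_const_mul {c : ℝ} (hc : c ≠ 0) (K : ℝ) (f : ℝ → ℝ) (x : ℝ) :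
    schwarzianRHS K (fun y => c * f y) x = schwarzianRHS K f x / c ^ 2 := by
  simp only [schwarzianRHS, iteratedDeriv_const_mul_field, deriv_const_mul_field]
  rcases eq_or_ne (deriv f x) 0 with hf | hf
  · simp [hf]
  · field_simp

theorem HasDerivAt.const_mul_comp_div_const {g : ℝ → ℝ} {g' : ℝ} (c : ℝ) {l t : ℝ}
    (hg : HasDerivAt g g' (t / l)) : HasDerivAt (fun s => c * g (s / l)) (c * g' / l) t := by
  rw [mul_div_assoc]
  simpa [Function.comp_def, div_eq_mul_inv] using
    (hg.comp t ((hasDerivAt_id t).div_const l)).const_mul c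

theorem schwarzian_scaling_symmetry_general (K : ℝ) (u : ℝ → ℝ → ℝ)
    (hx : ∀ t x, deriv (u t) x ≠ 0)
    (hsol : ∀ t x, HasDerivAt (fun s => u s x)
      (K * (iteratedDeriv 3 (u t) x / (deriv (u t) x) ^ 3
        - (3 / 2) * (iteratedDeriv 2 (u t) x) ^ 2 / (deriv (u t) x) ^ 4)) t) :
    ∀ l : ℝ, 0 < l → ∀ v : ℝ → ℝ → ℝ,
      (∀ t x, v t x = l ^ ((1 : ℝ) / 3) * u (t / l) x) →
      ∀ t x, deriv (v t) x ≠ 0 ∧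
        HasDerivAt (fun s => v s x)
          (K * (iteratedDeriv 3 (v t) x / (deriv (v t) x) ^ 3
            - (3 / 2) * (iteratedDeriv 2 (v t) x) ^ 2 / (deriv (v t) x) ^ 4)) t := by
  intro l hl v hv t x
  set c := l ^ ((1 : ℝ) / 3)
  have hc : 0 < c := Real.rpow_pos_of_pos hl _
  have hc3 : c ^ 3 = l := by
    simpa [c, one_div] using Real.rpow_inv_natCast_pow hl.le (n := 3) (by norm_num)
  have hvt : v t = fun y => c * u (t / l) y := funext (hv t)
  have hvx : (fun s => v s x) = fun s => c * u (s / l) x := funext fun s => hv s x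
  refine ⟨?_, ?_⟩
  · rw [hvt, deriv_const_mul_field]
    exact mul_ne_zero hc.ne' (hx _ _)
  · change HasDerivAt _ (schwarzianRHS K (v t) x) t
    rw [hvt, schwarzianRHS_const_mul hc.ne', hvx]
    convert (hsol (t / l) x).const_mul_comp_div_const c using 1
    change _ = c * schwarzianRHS K (u (t / l)) x / l
    rw [← hc3]
    field_simp

/-- Scaling symmetry of the Schwarzian evolution equation
`u_t = K (u_{xxx}/u_x³ - (3/2) u_{xx}²/u_x⁴)`: if `u` is a solution with
`u_x ≠ 0` everywhere (each `u t` being `C³`), then for every `λ > 0` the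
function `v t x = λ^(1/3) * u (t/λ) x` is again a solution. -/
theorem schwarzian_scaling_symmetry (K : ℝ) (u : ℝ → ℝ → ℝ)
    (hreg : ∀ t, ContDiff ℝ 3 (u t))
    (hx : ∀ t x, deriv (u t) x ≠ 0)
    (hsol : ∀ t x, HasDerivAt (fun s => u s x)
      (K * (iteratedDeriv 3 (u t) x / (deriv (u t) x) ^ 3
        - (3 / 2) * (iteratedDeriv 2 (u t) x) ^ 2 / (deriv (u t) x) ^ 4)) t) :
    ∀ l : ℝ, 0 < l → ∀ v : ℝ → ℝ → ℝ,
      (∀ t x, v t x = l ^ ((1 : ℝ) / 3) * u (t / l) x) →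
      ∀ t x, deriv (v t) x ≠ 0 ∧
        HasDerivAt (fun s => v s x)
          (K * (iteratedDeriv 3 (v t) x / (deriv (v t) x) ^ 3
            - (3 / 2) * (iteratedDeriv 2 (v t) x) ^ 2 / (deriv (v t) x) ^ 4)) t :=
  schwarzian_scaling_symmetry_general K u hx hsol
end

section
/- Let f, g, c : ℝ → ℝ → ℝ be such that for every t the function c t is three times continuously differentiable (ContDiff ℝ 3), iteratedDeriv 2 (c t) x ≠ 0 for all t, x, and for all t, x the function s ↦ c s x is differentiable at t. Suppose u : ℝ → ℝ → ℝ satisfies: each u t is ContDiff ℝ 3, and for all t, x the function s ↦ u s x has derivative f t x · iteratedDeriv 3 (u t) x + ((deriv (fun s => c s x) t − f t x · iteratedDeriv 3 (c t) x) / iteratedDeriv 2 (c t) x) · iteratedDeriv 2 (u t) x + g t x at s = t. Then for all real constants α, β, γ, the function w defined by w t x = u t x + α + β·x + γ·c t x satisfies the same equation: for all t, x, the function s ↦ w s x has derivative f t x · iteratedDeriv 3 (w t) x + ((deriv (fun s => c s x) t − f t x · iteratedDeriv 3 (c t) x) / iteratedDeriv 2 (c t) x) · iteratedDeriv 2 (w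 t) x + g t x at s = t. -/
/-! The equation is linear in `u` with source term `g`, and each of `1`, `x` and `c` solves its
homogeneous part: the affine functions because their second and third `x`-derivatives and their
`t`-derivative vanish, and `c` because the coefficient of `u_{xx}` was chosen so that
`c_t = f c_{xxx} + ((c_t - f c_{xxx}) / c_{xx}) c_{xx}`. Superposition does the rest. -/

section IteratedDeriv

variable {𝕜 : Type*} [NontriviallyNormedField 𝕜] {n : ℕ} {x : 𝕜}

theorem iteratedDeriv_add_affine {u : 𝕜 → 𝕜} (hn : 2 ≤ n) (hu : ContDiffAt 𝕜 n u x)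
    (α β : 𝕜) :
    iteratedDeriv n (fun y => u y + α + β * y) x = iteratedDeriv n u x := by
  have hlin : ContDiffAt 𝕜 n (fun y : 𝕜 => β * y) x := contDiffAt_const.mul contDiffAt_id
  rw [show (fun y => u y + α + β * y) = fun y => α + (u y + β * y) by ext; ring,
    iteratedDeriv_const_add (by omega), iteratedDeriv_fun_add hu hlin,
    iteratedDeriv_const_mul_field, iteratedDeriv_fun_id, if_neg (by omega), if_neg (by omega),
    mul_zero, add_zero]

theorem iteratedDeriv_add_affine_add_const_mul {u c : 𝕜 → 𝕜} (hn : 2 ≤ n)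
    (hu : ContDiffAt 𝕜 n u x) (hc : ContDiffAt 𝕜 n c x) (α β γ : 𝕜) :
    iteratedDeriv n (fun y => u y + α + β * y + γ * c y) x
      = iteratedDeriv n u x + γ * iteratedDeriv n c x := by
  have haff : ContDiffAt 𝕜 n (fun y => u y + α + β * y) x :=
    (hu.add contDiffAt_const).add (contDiffAt_const.mul contDiffAt_id)
  rw [iteratedDeriv_fun_add haff (contDiffAt_const.mul hc), iteratedDeriv_add_affine hn hu,
    iteratedDeriv_const_mul_field]

end IteratedDeriv

/-- The flows of the abelian symmetry algebra `⟨∂u, x ∂u, c(t,x) ∂u⟩` map solutions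
of the quasi-linear equation
`u_t = f u_{xxx} + ((c_t - f c_{xxx})/c_{xx}) u_{xx} + g`
to solutions: if `u` solves the equation, so does
`w t x = u t x + α + β x + γ c t x` for all real constants `α, β, γ`. -/
theorem abelian_rank_one_symmetry_flows (f g c : ℝ → ℝ → ℝ)
    (hc_reg : ∀ t, ContDiff ℝ 3 (c t))
    (hc2 : ∀ t x, iteratedDeriv 2 (c t) x ≠ 0)
    (hc_t : ∀ t x, DifferentiableAt ℝ (fun s => c s x) t)
    (u : ℝ → ℝ → ℝ)
    (hu_reg : ∀ t, ContDiff ℝ 3 (u t))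
    (hu : ∀ t x, HasDerivAt (fun s => u s x)
      (f t x * iteratedDeriv 3 (u t) x
        + ((deriv (fun s => c s x) t - f t x * iteratedDeriv 3 (c t) x)
            / iteratedDeriv 2 (c t) x) * iteratedDeriv 2 (u t) x
        + g t x) t)
    (α β γ : ℝ) (w : ℝ → ℝ → ℝ)
    (hw : ∀ t x, w t x = u t x + α + β * x + γ * c t x) :
    ∀ t x, HasDerivAt (fun s => w s x)
      (f t x * iteratedDeriv 3 (w t) x
        + ((deriv (fun s => c s x) t - f t x * iteratedDeriv 3 (c t) x)
            / iteratedDeriv 2 (c t) x) * iteratedDeriv 2 (w t) x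
        + g t x) t := by
  intro t x
  have hw_space : w t = fun y => u t y + α + β * y + γ * c t y := funext (hw t)
  have hw_time : (fun s => w s x) = fun s => u s x + α + β * x + γ * c s x := funext (hw · x)
  have hu_at (n : ℕ) (hn : n ≤ 3) : ContDiffAt ℝ n (u t) x :=
    ((hu_reg t).of_le (by exact_mod_cast hn)).contDiffAt
  have hc_at (n : ℕ) (hn : n ≤ 3) : ContDiffAt ℝ n (c t) x :=
    ((hc_reg t).of_le (by exact_mod_cast hn)).contDiffAt
  rw [hw_space, hw_time,
    iteratedDeriv_add_affine_add_const_mul le_rfl (hu_at 2 (by norm_num)) (hc_at 2 (by norm_num)),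
    iteratedDeriv_add_affine_add_const_mul (by norm_num) (hu_at 3 le_rfl) (hc_at 3 le_rfl)]
  refine (((hu t x).add_const α).add_const (β * x)).add
    ((hc_t t x).hasDerivAt.const_mul γ) |>.congr_deriv ?_
  have hc_homogeneous :
      (deriv (fun s => c s x) t - f t x * iteratedDeriv 3 (c t) x) / iteratedDeriv 2 (c t) x
        * iteratedDeriv 2 (c t) x = deriv (fun s => c s x) t - f t x * iteratedDeriv 3 (c t) x :=
    div_mul_cancel₀ _ (hc2 t x)
  linear_combination -γ * hc_homogeneous
end

section
/- Let F, G : ℝ × ℝ × ℝ × ℝ × ℝ → ℝ be differentiable functions of the variables (t, x, u, p, q) (here p, q stand for u₁, u₂), and let c : ℝ → ℝ be three times differentiable with second derivative c''(x) ≠ 0 for all x. Suppose F and G satisfy, at every point (t,x,u,p,q): (i) ∂F/∂t = 0 and ∂G/∂t = 0; (ii) ∂F/∂u = 0 and ∂G/∂u = 0; (iii) ∂F/∂p + x·∂F/∂u = 0 and ∂G/∂p + x·∂G/∂u = 0; (iv) c''(x)·∂F/∂q + c'(x)·∂F/∂p + c(x)·∂F/∂u = 0; and (v) F·c'''(x)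 + c''(x)·∂G/∂q + c'(x)·∂G/∂p + c(x)·∂G/∂u = 0. Then there exist functions f, g : ℝ → ℝ such that for all (t,x,u,p,q): F(t,x,u,p,q) = f(x) and G(t,x,u,p,q) = −(c'''(x)·f(x)/c''(x))·q + g(x). -/
/-!
With (ii), equations (iii) and (iv) say that `∂ₚF`, `∂ₚG` and `c'' ∂_qF` vanish, so all partial
derivatives of `F` other than `∂ₓF` vanish and `F` depends on `x` alone. Equation (v) then gives
`∂_qG = -c''' F / c''`, which is independent of `q`, so `G` is affine in `q`. Both conclusions come
from integrating a constant directional derivative along a line.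
-/

section LineRestriction

variable {E F : Type*} [NormedAddCommGroup E] [NormedSpace ℝ E]
  [NormedAddCommGroup F] [NormedSpace ℝ F] {f : E → F}

theorem Differentiable.apply_add_smul_eq_of_fderiv_apply_eq (hf : Differentiable ℝ f)
    {a v : E} {k : F} (h : ∀ s : ℝ, fderiv ℝ f (a + s • v) v = k) (s : ℝ) :
    f (a + s • v) = f a + s • k := by
  have hψ : ∀ r : ℝ, HasDerivAt (fun r : ℝ => f (a + r • v) - r • k) 0 r := fun r => by
    have hline : HasDerivAt (fun r : ℝ => a + r • v) v r := by
      simpa using ((hasDerivAt_id r).smul_const v).const_add a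
    have := ((hf _).hasFDerivAt.comp_hasDerivAt r hline).sub ((hasDerivAt_id r).smul_const k)
    rwa [h r, one_smul, sub_self] at this
  have := is_const_of_deriv_eq_zero (fun r => (hψ r).differentiableAt) (fun r => (hψ r).deriv) s 0
  simpa [sub_eq_iff_eq_add, add_comm] using this

theorem Differentiable.apply_add_smul_eq_of_fderiv_apply_eq_zero (hf : Differentiable ℝ f)
    {a v : E} (h : ∀ s : ℝ, fderiv ℝ f (a + s • v) v = 0) (s : ℝ) :
    f (a + s • v) = f a := by
  simpa using hf.apply_add_smul_eq_of_fderiv_apply_eq h s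

end LineRestriction

section JetSpace

variable {F : Type*} [NormedAddCommGroup F] [NormedSpace ℝ F] {f : ℝ × ℝ × ℝ × ℝ × ℝ → F}

theorem Differentiable.apply_eq_apply_zero_of_fderiv_t_u_p_eq_zero (hf : Differentiable ℝ f)
    (ht : ∀ t x u p q : ℝ, fderiv ℝ f (t, x, u, p, q) (1, 0, 0, 0, 0) = 0)
    (hu : ∀ t x u p q : ℝ, fderiv ℝ f (t, x, u, p, q) (0, 0, 1, 0, 0) = 0)
    (hp : ∀ t x u p q : ℝ, fderiv ℝ f (t, x, u, p, q) (0, 0, 0, 1, 0) = 0)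
    (t x u p q : ℝ) : f (t, x, u, p, q) = f (0, x, 0, 0, q) := by
  have et : f (t, x, u, p, q) = f (0, x, u, p, q) := by
    simpa using hf.apply_add_smul_eq_of_fderiv_apply_eq_zero
      (a := (0, x, u, p, q)) (v := (1, 0, 0, 0, 0)) (fun s => by simpa using ht s x u p q) t
  have eu : f (0, x, u, p, q) = f (0, x, 0, p, q) := by
    simpa using hf.apply_add_smul_eq_of_fderiv_apply_eq_zero
      (a := (0, x, 0, p, q)) (v := (0, 0, 1, 0, 0)) (fun s => by simpa using hu 0 x s p q) u
  have ep : f (0, x, 0, p, q) = f (0, x, 0, 0, q) := by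
    simpa using hf.apply_add_smul_eq_of_fderiv_apply_eq_zero
      (a := (0, x, 0, 0, q)) (v := (0, 0, 0, 1, 0)) (fun s => by simpa using hp 0 x 0 s q) p
  rw [et, eu, ep]

theorem Differentiable.apply_q_eq_of_fderiv_q_eq (hf : Differentiable ℝ f) {x : ℝ} {k : F}
    (hq : ∀ s : ℝ, fderiv ℝ f (0, x, 0, 0, s) (0, 0, 0, 0, 1) = k) (q : ℝ) :
    f (0, x, 0, 0, q) = f (0, x, 0, 0, 0) + q • k := by
  simpa using hf.apply_add_smul_eq_of_fderiv_apply_eq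
    (a := (0, x, 0, 0, 0)) (v := (0, 0, 0, 0, 1)) (fun s => by simpa using hq s) q

end JetSpace

theorem four_dim_abelian_symmetry_forces_quasilinear_general
    (F G : ℝ × ℝ × ℝ × ℝ × ℝ → ℝ)
    (hF : Differentiable ℝ F) (hG : Differentiable ℝ G)
    (c : ℝ → ℝ)
    (hcne : ∀ x, deriv (deriv c) x ≠ 0)
    -- (i) invariance under ∂t
    (h1F : ∀ t x u p q : ℝ, fderiv ℝ F (t, x, u, p, q) (1, 0, 0, 0, 0) = 0)
    (h1G : ∀ t x u p q : ℝ, fderiv ℝ G (t, x, u, p, q) (1, 0, 0, 0, 0) = 0)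
    -- (ii) invariance under ∂u
    (h2F : ∀ t x u p q : ℝ, fderiv ℝ F (t, x, u, p, q) (0, 0, 1, 0, 0) = 0)
    (h2G : ∀ t x u p q : ℝ, fderiv ℝ G (t, x, u, p, q) (0, 0, 1, 0, 0) = 0)
    -- (iii) invariance under x ∂u
    (h3F : ∀ t x u p q : ℝ, fderiv ℝ F (t, x, u, p, q) (0, 0, 0, 1, 0)
      + x * fderiv ℝ F (t, x, u, p, q) (0, 0, 1, 0, 0) = 0)
    (h3G : ∀ t x u p q : ℝ, fderiv ℝ G (t, x, u, p, q) (0, 0, 0, 1, 0)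
      + x * fderiv ℝ G (t, x, u, p, q) (0, 0, 1, 0, 0) = 0)
    -- (iv) invariance of F under c(x) ∂u
    (h4F : ∀ t x u p q : ℝ,
      deriv (deriv c) x * fderiv ℝ F (t, x, u, p, q) (0, 0, 0, 0, 1)
      + deriv c x * fderiv ℝ F (t, x, u, p, q) (0, 0, 0, 1, 0)
      + c x * fderiv ℝ F (t, x, u, p, q) (0, 0, 1, 0, 0) = 0)
    -- (v) invariance of G under c(x) ∂u
    (h5G : ∀ t x u p q : ℝ,
      F (t, x, u, p, q) * deriv (deriv (deriv c)) x
      + deriv (deriv c) x * fderiv ℝ G (t, x, u, p, q) (0, 0, 0, 0, 1)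
      + deriv c x * fderiv ℝ G (t, x, u, p, q) (0, 0, 0, 1, 0)
      + c x * fderiv ℝ G (t, x, u, p, q) (0, 0, 1, 0, 0) = 0) :
    ∃ f g : ℝ → ℝ, ∀ t x u p q : ℝ,
      F (t, x, u, p, q) = f x ∧
      G (t, x, u, p, q)
        = -(deriv (deriv (deriv c)) x * f x / deriv (deriv c) x) * q + g x := by
  have hpF t x u p q : fderiv ℝ F (t, x, u, p, q) (0, 0, 0, 1, 0) = 0 := by
    linear_combination h3F t x u p q - x * h2F t x u p q
  have hpG t x u p q : fderiv ℝ G (t, x, u, p, q) (0, 0, 0, 1, 0) = 0 := by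
    linear_combination h3G t x u p q - x * h2G t x u p q
  have hqF t x u p q : fderiv ℝ F (t, x, u, p, q) (0, 0, 0, 0, 1) = 0 := by
    refine (mul_eq_zero.mp ?_).resolve_left (hcne x)
    linear_combination h4F t x u p q - deriv c x * hpF t x u p q - c x * h2F t x u p q
  have hF_eq t x u p q : F (t, x, u, p, q) = F (0, x, 0, 0, 0) := by
    rw [hF.apply_eq_apply_zero_of_fderiv_t_u_p_eq_zero h1F h2F hpF,
      hF.apply_q_eq_of_fderiv_q_eq (fun s => hqF 0 x 0 0 s), smul_zero, add_zero]
  have hqG t x u p q : fderiv ℝ G (t, x, u, p, q) (0, 0, 0, 0, 1)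
      = -(deriv (deriv (deriv c)) x * F (0, x, 0, 0, 0) / deriv (deriv c) x) := by
    rw [← hF_eq t x u p q, ← neg_div, eq_div_iff (hcne x)]
    linear_combination h5G t x u p q - deriv c x * hpG t x u p q - c x * h2G t x u p q
  refine ⟨fun x => F (0, x, 0, 0, 0), fun x => G (0, x, 0, 0, 0),
    fun t x u p q => ⟨hF_eq t x u p q, ?_⟩⟩
  rw [hG.apply_eq_apply_zero_of_fderiv_t_u_p_eq_zero h1G h2G hpG,
    hG.apply_q_eq_of_fderiv_q_eq (fun s => hqG 0 x 0 0 s), smul_eq_mul]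
  ring

/-- If `F, G` satisfy the determining equations for the vector fields
`∂t`, `∂u`, `x ∂u`, `c(x) ∂u` (with `c'' ≠ 0`) to be symmetries of the evolution
equation `u_t = F(t,x,u,u₁,u₂) u₃ + G(t,x,u,u₁,u₂)`, then
`F(t,x,u,p,q) = f(x)` and `G(t,x,u,p,q) = -(c'''(x) f(x)/c''(x)) q + g(x)`
for some functions `f, g`. -/
theorem four_dim_abelian_symmetry_forces_quasilinear
    (F G : ℝ × ℝ × ℝ × ℝ × ℝ → ℝ)
    (hF : Differentiable ℝ F) (hG : Differentiable ℝ G)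
    (c : ℝ → ℝ)
    (hc1 : Differentiable ℝ c)
    (hc2 : Differentiable ℝ (deriv c))
    (hc3 : Differentiable ℝ (deriv (deriv c)))
    (hcne : ∀ x, deriv (deriv c) x ≠ 0)
    -- (i) invariance under ∂t
    (h1F : ∀ t x u p q : ℝ, fderiv ℝ F (t, x, u, p, q) (1, 0, 0, 0, 0) = 0)
    (h1G : ∀ t x u p q : ℝ, fderiv ℝ G (t, x, u, p, q) (1, 0, 0, 0, 0) = 0)
    -- (ii) invariance under ∂u
    (h2F : ∀ t x u p q : ℝ, fderiv ℝ F (t, x, u, p, q) (0, 0, 1, 0, 0) = 0)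
    (h2G : ∀ t x u p q : ℝ, fderiv ℝ G (t, x, u, p, q) (0, 0, 1, 0, 0) = 0)
    -- (iii) invariance under x ∂u
    (h3F : ∀ t x u p q : ℝ, fderiv ℝ F (t, x, u, p, q) (0, 0, 0, 1, 0)
      + x * fderiv ℝ F (t, x, u, p, q) (0, 0, 1, 0, 0) = 0)
    (h3G : ∀ t x u p q : ℝ, fderiv ℝ G (t, x, u, p, q) (0, 0, 0, 1, 0)
      + x * fderiv ℝ G (t, x, u, p, q) (0, 0, 1, 0, 0) = 0)
    -- (iv) invariance of F under c(x) ∂u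
    (h4F : ∀ t x u p q : ℝ,
      deriv (deriv c) x * fderiv ℝ F (t, x, u, p, q) (0, 0, 0, 0, 1)
      + deriv c x * fderiv ℝ F (t, x, u, p, q) (0, 0, 0, 1, 0)
      + c x * fderiv ℝ F (t, x, u, p, q) (0, 0, 1, 0, 0) = 0)
    -- (v) invariance of G under c(x) ∂u
    (h5G : ∀ t x u p q : ℝ,
      F (t, x, u, p, q) * deriv (deriv (deriv c)) x
      + deriv (deriv c) x * fderiv ℝ G (t, x, u, p, q) (0, 0, 0, 0, 1)
      + deriv c x * fderiv ℝ G (t, x, u, p, q) (0, 0, 0, 1, 0)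
      + c x * fderiv ℝ G (t, x, u, p, q) (0, 0, 1, 0, 0) = 0) :
    ∃ f g : ℝ → ℝ, ∀ t x u p q : ℝ,
      F (t, x, u, p, q) = f x ∧
      G (t, x, u, p, q)
        = -(deriv (deriv (deriv c)) x * f x / deriv (deriv c) x) * q + g x :=
  four_dim_abelian_symmetry_forces_quasilinear_general F G hF hG c hcne h1F h1G h2F h2G h3F h3G h4F
    h5G
end
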